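/- arXiv:2509.13582 — 5 statements merged into one kernel-verified Lean document; each statement's English description precedes it below -/
import Mathlib

section
/- Let K : Ω × Ω → ℝ be a symmetric positive semidefinite kernel on a compact set Ω ⊂ ℝᵈ satisfying the diagonal Lipschitz condition |K(x,x) − K(x,y)| ≤ L‖x−y‖ for all x,y ∈ Ω, with L > 0. Fix z₁ ∈ Ω with K(z₁,z₁) > 0 and define the one-step Cholesky residual R₁(x,y) = K(x,y) − K(x,z₁)K(z₁,y)/K(z₁,z₁). Then for all x ∈ Ω, 0 ≤ R₁(x,x) ≤ 4L‖x − z₁‖. -/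
/-- A kernel `K` on a set `Ω` is symmetric positive semidefinite if it is symmetric on `Ω`
and every finite kernel matrix formed from points of `Ω` is positive semidefinite. -/
def IsPSDKernel {E : Type*} (Ω : Set E) (K : E → E → ℝ) : Prop :=
  (∀ x ∈ Ω, ∀ y ∈ Ω, K x y = K y x) ∧
  ∀ (n : ℕ) (p : Fin n → E), (∀ i, p i ∈ Ω) →
    ∀ c : Fin n → ℝ, 0 ≤ ∑ i, ∑ j, c i * c j * K (p i) (p j)

theorem one_step_cholesky_diag_bound {d : ℕ}
    (Ω : Set (EuclideanSpace ℝ (Fin d))) (hΩ : IsCompact Ω)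
    (K : EuclideanSpace ℝ (Fin d) → EuclideanSpace ℝ (Fin d) → ℝ)
    (hK : IsPSDKernel Ω K) (L : ℝ) (hL : 0 < L)
    (hLip : ∀ x ∈ Ω, ∀ y ∈ Ω, |K x x - K x y| ≤ L * ‖x - y‖)
    (z₁ : EuclideanSpace ℝ (Fin d)) (hz₁ : z₁ ∈ Ω) (hpos : 0 < K z₁ z₁)
    (R₁ : EuclideanSpace ℝ (Fin d) → EuclideanSpace ℝ (Fin d) → ℝ)
    (hR₁ : ∀ x y, R₁ x y = K x y - K x z₁ * K z₁ y / K z₁ z₁) :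
    ∀ x ∈ Ω, 0 ≤ R₁ x x ∧ R₁ x x ≤ 4 * L * ‖x - z₁‖ := by
  obtain ⟨hsym, hpsd⟩ := hK
  intro x hx
  set a := K x x with ha
  set b := K x z₁ with hb
  set c := K z₁ z₁ with hc
  set t := ‖x - z₁‖ with htdef
  have ht : 0 ≤ t := norm_nonneg _
  have hLt : 0 ≤ L * t := mul_nonneg hL.le ht
  have hba : |a - b| ≤ L * t := hLip x hx z₁ hz₁
  have hzx : K z₁ x = b := hsym z₁ hz₁ x hx
  have hcb : |c - b| ≤ L * t := by
    have h := hLip z₁ hz₁ x hx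
    rw [hzx, norm_sub_rev] at h
    exact h
  have hPSD : 0 ≤ a * c - b * b := by
    have h := hpsd 2 ![x, z₁] (by intro i; fin_cases i <;> simpa) ![c, -b]
    simp only [Fin.sum_univ_two, Matrix.cons_val_zero, Matrix.cons_val_one,
      Matrix.head_cons] at h
    rw [hzx] at h
    nlinarith [h, hpos]
  have h1 := abs_le.mp hba
  have h2 := abs_le.mp hcb
  have hRa : R₁ x x = a - b * b / c := by rw [hR₁, hzx]
  constructor
  · rw [hRa]
    have hbd : b * b / c ≤ a := by
      rw [div_le_iff₀ hpos]; nlinarith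
    linarith
  · rw [hRa]
    rcases le_or_gt c (2 * (L * t)) with hcase | hcase
    · have hdiv : 0 ≤ b * b / c := div_nonneg (mul_self_nonneg b) hpos.le
      nlinarith
    · have hbpos : 0 < b := by nlinarith
      have key : a * c - b * b ≤ 4 * L * t * c := by nlinarith
      calc a - b * b / c = (a * c - b * b) / c := by field_simp
        _ ≤ (4 * L * t * c) / c := by gcongr
        _ = 4 * L * t := by field_simp
end

section
/- Let K : Ω × Ω → ℝ be a symmetric positive semidefinite kernel on a compact Ω ⊂ ℝᵈ satisfying |K(x,x) − K(x,y)| ≤ L‖x−y‖ for all x,y ∈ Ω. Let z₁,…,zₙ ∈ Ω be any pivots for which the pivoted Cholesky algorithm is well-defined (each diagonal residual at the next pivot is positive), and let Rₙ be the residual after n steps. Then for all x ∈ Ω, 0 ≤ Rₙ(x,x) ≤ 4L · min_{1≤i≤n} ‖x − zᵢ‖. -/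
noncomputable def cholStep {E : Type*} (R : E → E → ℝ) (z : E) : E → E → ℝ :=
  fun x y => R x y - R x z * R z y / R z z

noncomputable def cholResid {E : Type*} (K : E → E → ℝ) (zs : List E) : E → E → ℝ :=
  zs.foldl cholStep K

open Finset

variable {E : Type*}

noncomputable def kernelSqDist (R : E → E → ℝ) (x w : E) : ℝ :=
  R x x - R x w - R w x + R w w

def PositivePivots (R : E → E → ℝ) : List E → Prop
  | [] => True
  | a :: zs => 0 < R a a ∧ PositivePivots (cholStep R a) zs

@[simp]
lemma cholResid_nil (R : E → E → ℝ) : cholResid R [] = R := rfl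

@[simp]
lemma cholResid_cons (R : E → E → ℝ) (a : E) (zs : List E) :
    cholResid R (a :: zs) = cholResid (cholStep R a) zs := rfl

lemma positivePivots_of_forall_take_pos {R : E → E → ℝ} {zs : List E}
    (h : ∀ i : Fin zs.length, 0 < cholResid R (zs.take i) zs[i] zs[i]) :
    PositivePivots R zs := by
  induction zs generalizing R with
  | nil => trivial
  | cons a zs ih =>
    exact ⟨by simpa using h 0, ih fun i => by simpa using h i.succ⟩

section NullPoints

lemma cholStep_self_row_eq_zero {R : E → E → ℝ} {a : E} (ha : R a a ≠ 0) (y : E) :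
    cholStep R a a y = 0 := by
  simp [cholStep, ha]

lemma cholStep_self_col_eq_zero {R : E → E → ℝ} {a : E} (ha : R a a ≠ 0) (y : E) :
    cholStep R a y a = 0 := by
  simp [cholStep, ha]

lemma cholResid_row_eq_zero {R : E → E → ℝ} {w : E} (hw : ∀ y, R w y = 0) (zs : List E)
    (y : E) : cholResid R zs w y = 0 := by
  induction zs generalizing R with
  | nil => exact hw y
  | cons a zs ih => exact ih (fun y => by simp [cholStep, hw])

lemma cholResid_col_eq_zero {R : E → E → ℝ} {w : E} (hw : ∀ y, R y w = 0) (zs : List E)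
    (y : E) : cholResid R zs y w = 0 := by
  induction zs generalizing R with
  | nil => exact hw y
  | cons a zs ih => exact ih (fun y => by simp [cholStep, hw])

lemma cholResid_pivot_row_col_eq_zero {R : E → E → ℝ} {zs : List E}
    (hpos : PositivePivots R zs) {w : E} (hw : w ∈ zs) (y : E) :
    cholResid R zs w y = 0 ∧ cholResid R zs y w = 0 := by
  induction zs generalizing R with
  | nil => simp at hw
  | cons a zs ih =>
    obtain ⟨ha, hpos⟩ := hpos
    rcases List.mem_cons.mp hw with rfl | hw
    · exact ⟨cholResid_row_eq_zero (cholStep_self_row_eq_zero ha.ne') zs y,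
        cholResid_col_eq_zero (cholStep_self_col_eq_zero ha.ne') zs y⟩
    · exact ih hpos hw

end NullPoints

section PositiveSemidefinite

variable {Ω : Set E} {R : E → E → ℝ}

lemma IsPSDKernel.diag_nonneg (hR : IsPSDKernel Ω R) {x : E} (hx : x ∈ Ω) : 0 ≤ R x x := by
  simpa using hR.2 1 (fun _ => x) (fun _ => hx) (fun _ => 1)

lemma quadForm_cholStep {m : ℕ} (a : E) (p : Fin m → E) (c : Fin m → ℝ)
    (hsymm : ∀ j, R a (p j) = R (p j) a) :
    ∑ i, ∑ j, c i * c j * cholStep R a (p i) (p j)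
      = ∑ i, ∑ j, c i * c j * R (p i) (p j) - (∑ i, c i * R (p i) a) ^ 2 / R a a := by
  simp only [cholStep, hsymm, mul_sub, sum_sub_distrib, sq, sum_mul, mul_sum, sum_div]
  congr 1
  refine sum_congr rfl fun i _ => sum_congr rfl fun j _ => ?_
  ring

lemma IsPSDKernel.quadForm_snoc_nonneg (hR : IsPSDKernel Ω R) {m : ℕ} {a : E} (ha : a ∈ Ω)
    {p : Fin m → E} (hp : ∀ i, p i ∈ Ω) (c : Fin m → ℝ) (t : ℝ) :
    0 ≤ ∑ i, ∑ j, c i * c j * R (p i) (p j) + 2 * t * ∑ i, c i * R (p i) a + t ^ 2 * R a a := by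
  have h := hR.2 (m + 1) (Fin.snoc p a) (Fin.lastCases (by simpa) (by simpa)) (Fin.snoc c t)
  simp only [Fin.sum_univ_castSucc, Fin.snoc_castSucc, Fin.snoc_last, sum_add_distrib] at h
  have hsymm : ∀ j, R a (p j) = R (p j) a := fun j => hR.1 a ha (p j) (hp j)
  simp only [hsymm] at h
  have hS₁ : ∑ i, t * c i * R (p i) a = t * ∑ i, c i * R (p i) a := by
    rw [mul_sum]
    exact sum_congr rfl fun i _ => by ring
  have hS₂ : ∑ i, c i * t * R (p i) a = t * ∑ i, c i * R (p i) a := by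
    rw [mul_sum]
    exact sum_congr rfl fun i _ => by ring
  rw [hS₁, hS₂] at h
  linarith

lemma isPSDKernel_cholStep (hR : IsPSDKernel Ω R) {a : E} (ha : a ∈ Ω) (haa : 0 < R a a) :
    IsPSDKernel Ω (cholStep R a) := by
  refine ⟨fun x hx y hy => ?_, fun m p hp c => ?_⟩
  · simp only [cholStep, hR.1 x hx y hy, hR.1 x hx a ha, hR.1 a ha y hy]
    ring
  · set S := ∑ i, c i * R (p i) a
    have h := hR.quadForm_snoc_nonneg ha hp c (-S / R a a)
    rw [quadForm_cholStep a p c fun j => hR.1 a ha (p j) (hp j)]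
    convert h using 1
    field_simp
    ring

lemma isPSDKernel_cholResid (hR : IsPSDKernel Ω R) {zs : List E} (hzs : ∀ w ∈ zs, w ∈ Ω)
    (hpos : PositivePivots R zs) : IsPSDKernel Ω (cholResid R zs) := by
  induction zs generalizing R with
  | nil => exact hR
  | cons a zs ih =>
    have ha : a ∈ Ω := hzs a List.mem_cons_self
    exact ih (isPSDKernel_cholStep hR ha hpos.1)
      (fun w hw => hzs w (List.mem_cons_of_mem a hw)) hpos.2

end PositiveSemidefinite

section SqDist

variable {Ω : Set E} {R : E → E → ℝ}

lemma kernelSqDist_cholStep {a x w : E} (hx : R a x = R x a) (hw : R a w = R w a) :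
    kernelSqDist (cholStep R a) x w = kernelSqDist R x w - (R x a - R w a) ^ 2 / R a a := by
  simp only [kernelSqDist, cholStep, hx, hw]
  ring

lemma kernelSqDist_cholResid_pivot {zs : List E} (hpos : PositivePivots R zs) {w : E}
    (hw : w ∈ zs) (x : E) : kernelSqDist (cholResid R zs) x w = cholResid R zs x x := by
  obtain ⟨hrow, hcol⟩ := cholResid_pivot_row_col_eq_zero hpos hw x
  simp [kernelSqDist, hrow, hcol, (cholResid_pivot_row_col_eq_zero hpos hw w).1]

lemma kernelSqDist_cholResid_le (hR : IsPSDKernel Ω R) {zs : List E}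
    (hzs : ∀ w ∈ zs, w ∈ Ω) (hpos : PositivePivots R zs) {x w : E} (hx : x ∈ Ω) (hw : w ∈ Ω) :
    kernelSqDist (cholResid R zs) x w ≤ kernelSqDist R x w := by
  induction zs generalizing R with
  | nil => exact le_rfl
  | cons a zs ih =>
    have ha : a ∈ Ω := hzs a List.mem_cons_self
    calc kernelSqDist (cholResid R (a :: zs)) x w
        ≤ kernelSqDist (cholStep R a) x w :=
          ih (isPSDKernel_cholStep hR ha hpos.1)
            (fun v hv => hzs v (List.mem_cons_of_mem a hv)) hpos.2
      _ ≤ kernelSqDist R x w := by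
          rw [kernelSqDist_cholStep (hR.1 a ha x hx) (hR.1 a ha w hw)]
          exact sub_le_self _ (div_nonneg (sq_nonneg _) hpos.1.le)

lemma kernelSqDist_le_of_abs_diag_sub_le [SeminormedAddCommGroup E] {L : ℝ}
    (hLip : ∀ x ∈ Ω, ∀ y ∈ Ω, |R x x - R x y| ≤ L * ‖x - y‖) {x w : E} (hx : x ∈ Ω)
    (hw : w ∈ Ω) : kernelSqDist R x w ≤ 2 * L * ‖x - w‖ := by
  have hxw := (le_abs_self _).trans (hLip x hx w hw)
  have hwx := (le_abs_self _).trans (hLip w hw x hx)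
  rw [norm_sub_rev] at hwx
  unfold kernelSqDist
  linarith

end SqDist

theorem multistep_diag_control_general {d n : ℕ}
    (Ω : Set (EuclideanSpace ℝ (Fin d)))
    (K : EuclideanSpace ℝ (Fin d) → EuclideanSpace ℝ (Fin d) → ℝ)
    (hK : IsPSDKernel Ω K) (L : ℝ)
    (hLip : ∀ x ∈ Ω, ∀ y ∈ Ω, |K x x - K x y| ≤ L * ‖x - y‖)
    (z : Fin n → EuclideanSpace ℝ (Fin d)) (hzΩ : ∀ i, z i ∈ Ω)
    (hwd : ∀ k : Fin n,
      0 < cholResid K ((List.ofFn z).take k) (z k) (z k)) :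
    ∀ x ∈ Ω, 0 ≤ cholResid K (List.ofFn z) x x ∧
      ∀ i : Fin n, cholResid K (List.ofFn z) x x ≤ 4 * L * ‖x - z i‖ := by
  have hzs : ∀ w ∈ List.ofFn z, w ∈ Ω := by
    simpa [List.mem_ofFn] using hzΩ
  have hpos : PositivePivots K (List.ofFn z) :=
    positivePivots_of_forall_take_pos fun i => by simpa using hwd ⟨i, by simpa using i.2⟩
  intro x hx
  refine ⟨(isPSDKernel_cholResid hK hzs hpos).diag_nonneg hx, fun i => ?_⟩
  have hLnonneg : 0 ≤ L * ‖x - z i‖ := (abs_nonneg _).trans (hLip x hx (z i) (hzΩ i))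
  calc cholResid K (List.ofFn z) x x
      = kernelSqDist (cholResid K (List.ofFn z)) x (z i) :=
        (kernelSqDist_cholResid_pivot hpos (List.mem_ofFn.mpr ⟨i, rfl⟩) x).symm
    _ ≤ kernelSqDist K x (z i) := kernelSqDist_cholResid_le hK hzs hpos hx (hzΩ i)
    _ ≤ 2 * L * ‖x - z i‖ := kernelSqDist_le_of_abs_diag_sub_le hLip hx (hzΩ i)
    _ ≤ 4 * L * ‖x - z i‖ := by linarith

theorem multistep_diag_control {d n : ℕ}
    (Ω : Set (EuclideanSpace ℝ (Fin d))) (hΩ : IsCompact Ω)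
    (K : EuclideanSpace ℝ (Fin d) → EuclideanSpace ℝ (Fin d) → ℝ)
    (hK : IsPSDKernel Ω K) (L : ℝ) (hL : 0 < L)
    (hLip : ∀ x ∈ Ω, ∀ y ∈ Ω, |K x x - K x y| ≤ L * ‖x - y‖)
    (z : Fin n → EuclideanSpace ℝ (Fin d)) (hzΩ : ∀ i, z i ∈ Ω)
    (hwd : ∀ k : Fin n,
      0 < cholResid K ((List.ofFn z).take k) (z k) (z k)) :
    ∀ x ∈ Ω, 0 ≤ cholResid K (List.ofFn z) x x ∧
      ∀ i : Fin n, cholResid K (List.ofFn z) x x ≤ 4 * L * ‖x - z i‖ :=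
  multistep_diag_control_general Ω K hK L hLip z hzΩ hwd
end

section
/- Let K : Ω × Ω → ℝ be a symmetric positive semidefinite kernel on a compact Ω ⊂ ℝᵈ satisfying |K(x,x) − K(x,y)| ≤ L‖x−y‖ for all x,y ∈ Ω. Let Zₙ = {z₁,…,zₙ} be the pivots of the pivoted Cholesky algorithm and Rₙ the residual after n steps. Then sup_{x,y∈Ω} |Rₙ(x,y)| ≤ 4L · h_{Zₙ}, where h_{Zₙ} = sup_{x∈Ω} min_{z∈Zₙ} ‖x−z‖ is the fill distance of the pivot set. -/
/-- The fill distance `h_Z = sup_{x ∈ Ω} min_{i} ‖x - zᵢ‖` of the points `z` in `Ω`. -/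
noncomputable def fillDistance {d n : ℕ} (Ω : Set (EuclideanSpace ℝ (Fin d)))
    (z : Fin n → EuclideanSpace ℝ (Fin d)) : ℝ :=
  ⨆ x : Ω, ⨅ i : Fin n, ‖(x : EuclideanSpace ℝ (Fin d)) - z i‖

/-!
Each Cholesky step subtracts a Schur complement, so every residual `R = Rₙ` is again a positive
semidefinite kernel with `R ≤ K` in the Loewner order, and it vanishes on the diagonal at every
pivot. Testing `R ≤ K` against `δₓ - δ_z` for a pivot `z` gives
`R(x,x) ≤ K(x,x) - K(x,z) + K(z,z) - K(z,x) ≤ 2L‖x - z‖`, hence `R(x,x) ≤ 2L h`, and the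
Cauchy–Schwarz inequality `R(x,y)² ≤ R(x,x) R(y,y)` extends this to
`|R(x,y)| ≤ 2L h ≤ 4L h`.
-/

variable {E : Type*} {Ω : Set E} {K R : E → E → ℝ}

def kernelQuadForm (R : E → E → ℝ) {m : ℕ} (p : Fin m → E) (c : Fin m → ℝ) : ℝ :=
  ∑ i, ∑ j, c i * c j * R (p i) (p j)

def KernelLE (Ω : Set E) (R K : E → E → ℝ) : Prop :=
  ∀ (m : ℕ) (p : Fin m → E), (∀ i, p i ∈ Ω) → ∀ c : Fin m → ℝ,
    kernelQuadForm R p c ≤ kernelQuadForm K p c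

theorem KernelLE.trans {R' : E → E → ℝ} (h₁ : KernelLE Ω R R') (h₂ : KernelLE Ω R' K) :
    KernelLE Ω R K :=
  fun m p hp c => (h₁ m p hp c).trans (h₂ m p hp c)

theorem kernelQuadForm_one (x : E) (a : ℝ) : kernelQuadForm R ![x] ![a] = a * a * R x x := by
  simp [kernelQuadForm]

theorem kernelQuadForm_two (x y : E) (a b : ℝ) :
    kernelQuadForm R ![x, y] ![a, b] =
      a * a * R x x + a * b * R x y + b * a * R y x + b * b * R y y := by
  simp only [kernelQuadForm, Fin.sum_univ_two, Matrix.cons_val_zero, Matrix.cons_val_one]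
  ring

theorem kernelQuadForm_snoc (hsym : ∀ x ∈ Ω, ∀ y ∈ Ω, R x y = R y x) {m : ℕ}
    {p : Fin m → E} (hp : ∀ i, p i ∈ Ω) {z : E} (hz : z ∈ Ω) (c : Fin m → ℝ)
    (t : ℝ) :
    kernelQuadForm R (Fin.snoc p z) (Fin.snoc c t : Fin (m + 1) → ℝ) =
      kernelQuadForm R p c + 2 * t * ∑ i, c i * R (p i) z + t ^ 2 * R z z := by
  have hsym' : ∀ j, R z (p j) = R (p j) z := fun j => hsym z hz (p j) (hp j)
  simp only [kernelQuadForm, Fin.sum_univ_castSucc, Fin.snoc_castSucc, Fin.snoc_last, hsym',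
    Finset.sum_add_distrib, Finset.mul_sum]
  ring_nf
  rw [Finset.sum_mul]

theorem kernelQuadForm_cholStep (hsym : ∀ x ∈ Ω, ∀ y ∈ Ω, R x y = R y x) {m : ℕ}
    {p : Fin m → E} (hp : ∀ i, p i ∈ Ω) {z : E} (hz : z ∈ Ω) (c : Fin m → ℝ) :
    kernelQuadForm (cholStep R z) p c =
      kernelQuadForm R p c - (∑ i, c i * R (p i) z) ^ 2 / R z z := by
  have hsym' : ∀ j, R z (p j) = R (p j) z := fun j => hsym z hz (p j) (hp j)
  simp only [kernelQuadForm, cholStep, hsym', mul_sub, Finset.sum_sub_distrib, sq,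
    Finset.sum_mul_sum, Finset.sum_div]
  congr 1
  refine Finset.sum_congr rfl fun i _ => Finset.sum_congr rfl fun j _ => ?_
  ring

namespace IsPSDKernel

theorem symm (hR : IsPSDKernel Ω R) {x y : E} (hx : x ∈ Ω) (hy : y ∈ Ω) : R x y = R y x :=
  hR.1 x hx y hy

theorem kernelQuadForm_nonneg (hR : IsPSDKernel Ω R) {m : ℕ} {p : Fin m → E}
    (hp : ∀ i, p i ∈ Ω) (c : Fin m → ℝ) : 0 ≤ kernelQuadForm R p c :=
  hR.2 m p hp c

theorem apply_self_nonneg (hR : IsPSDKernel Ω R) {x : E} (hx : x ∈ Ω) : 0 ≤ R x x := by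
  simpa [kernelQuadForm_one] using
    hR.kernelQuadForm_nonneg (p := ![x]) (fun _ => by simpa using hx) ![1]

theorem sq_apply_le (hR : IsPSDKernel Ω R) {x y : E} (hx : x ∈ Ω) (hy : y ∈ Ω) :
    R x y ^ 2 ≤ R x x * R y y := by
  have hquad : ∀ t : ℝ, 0 ≤ R x x * (t * t) + 2 * R x y * t + R y y := fun t => by
    have h := hR.kernelQuadForm_nonneg (p := ![x, y]) (by simp [Fin.forall_fin_two, hx, hy])
      ![t, 1]
    rw [kernelQuadForm_two, hR.symm hy hx] at h
    linarith
  have := discrim_le_zero hquad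
  rw [discrim] at this
  linarith

theorem abs_apply_le (hR : IsPSDKernel Ω R) {x y : E} (hx : x ∈ Ω) (hy : y ∈ Ω) {b : ℝ}
    (hxx : R x x ≤ b) (hyy : R y y ≤ b) : |R x y| ≤ b := by
  have hx₀ := hR.apply_self_nonneg hx
  have hy₀ := hR.apply_self_nonneg hy
  refine abs_le_of_sq_le_sq ?_ (hx₀.trans hxx)
  calc R x y ^ 2 ≤ R x x * R y y := hR.sq_apply_le hx hy
    _ ≤ b ^ 2 := by rw [sq]; exact mul_le_mul hxx hyy hy₀ (hx₀.trans hxx)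

theorem apply_eq_zero_of_apply_self_eq_zero (hR : IsPSDKernel Ω R) {x z : E} (hx : x ∈ Ω)
    (hz : z ∈ Ω) (hzz : R z z = 0) : R x z = 0 := by
  have := hR.sq_apply_le hx hz
  rw [hzz, mul_zero] at this
  exact pow_eq_zero_iff two_ne_zero |>.mp (le_antisymm this (sq_nonneg _))

/-- Schur complement: the quadratic form of `cholStep R z` at `c` is that of `R` at `c`
extended by the coefficient `-s / R z z` at `z`, where `s = ∑ i, c i * R (p i) z`. -/
theorem cholStep (hR : IsPSDKernel Ω R) {z : E} (hz : z ∈ Ω) :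
    IsPSDKernel Ω (cholStep R z) := by
  refine ⟨fun x hx y hy => ?_, fun m p hp c => ?_⟩
  · simp only [_root_.cholStep, hR.symm hx hy, hR.symm hx hz, hR.symm hz hy]
    ring
  · set s := ∑ i, c i * R (p i) z
    have hq : ∀ i, (Fin.snoc p z : Fin (m + 1) → E) i ∈ Ω :=
      Fin.lastCases (by simpa using hz) (fun i => by simpa using hp i)
    have h := hR.kernelQuadForm_nonneg hq (Fin.snoc c (-(s / R z z)))
    rw [kernelQuadForm_snoc hR.1 hp hz] at h
    change 0 ≤ kernelQuadForm (_root_.cholStep R z) p c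
    rw [kernelQuadForm_cholStep hR.1 hp hz]
    rcases eq_or_ne (R z z) 0 with hzz | hzz
    · simpa [hzz] using h
    · convert h using 1
      field_simp
      ring

theorem cholStep_le (hR : IsPSDKernel Ω R) {z : E} (hz : z ∈ Ω) :
    KernelLE Ω (_root_.cholStep R z) R := fun m p hp c => by
  rw [kernelQuadForm_cholStep hR.1 hp hz]
  have := div_nonneg (sq_nonneg (∑ i, c i * R (p i) z)) (hR.apply_self_nonneg hz)
  linarith

theorem cholResid {zs : List E} (hR : IsPSDKernel Ω R) (hzs : ∀ z ∈ zs, z ∈ Ω) :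
    IsPSDKernel Ω (cholResid R zs) := by
  induction zs generalizing R with
  | nil => exact hR
  | cons a l ih =>
    exact ih (hR.cholStep (hzs a (by simp))) fun z hz => hzs z (by simp [hz])

theorem cholResid_le {zs : List E} (hR : IsPSDKernel Ω R) (hzs : ∀ z ∈ zs, z ∈ Ω) :
    KernelLE Ω (_root_.cholResid R zs) R := by
  induction zs generalizing R with
  | nil => exact fun m p _ c => le_rfl
  | cons a l ih =>
    have ha : a ∈ Ω := hzs a (by simp)
    exact (ih (hR.cholStep ha) fun z hz => hzs z (by simp [hz])).trans (hR.cholStep_le ha)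

end IsPSDKernel

theorem KernelLE.apply_self_le (h : KernelLE Ω R K) {x : E} (hx : x ∈ Ω) : R x x ≤ K x x := by
  simpa [kernelQuadForm_one] using h 1 ![x] (fun _ => by simpa using hx) ![1]

theorem cholStep_apply_self_self (R : E → E → ℝ) (z : E) : cholStep R z z z = 0 := by
  rcases eq_or_ne (R z z) 0 with h | h <;> simp [cholStep, h]

/-- `cholStep R z` vanishes at `(z, z)`, also when `R z z = 0` (where `x / 0 = 0` makes the
step the identity), and later steps keep the diagonal nonnegative and nonincreasing. -/
theorem IsPSDKernel.cholResid_apply_self_of_mem {zs : List E} (hR : IsPSDKernel Ω R)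
    (hzs : ∀ z ∈ zs, z ∈ Ω) {z : E} (hz : z ∈ zs) : _root_.cholResid R zs z z = 0 := by
  induction zs generalizing R with
  | nil => simp at hz
  | cons a l ih =>
    have ha : a ∈ Ω := hzs a (by simp)
    have hl : ∀ w ∈ l, w ∈ Ω := fun w hw => hzs w (by simp [hw])
    change _root_.cholResid (_root_.cholStep R a) l z z = 0
    rcases List.mem_cons.mp hz with rfl | hz
    · have hR' := hR.cholStep ha
      refine le_antisymm ?_ ((hR'.cholResid hl).apply_self_nonneg ha)
      exact ((hR'.cholResid_le hl).apply_self_le ha).trans_eq (cholStep_apply_self_self R z)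
    · exact ih (hR.cholStep ha) hl hz

theorem KernelLE.apply_self_le_of_apply_self_eq_zero (h : KernelLE Ω R K) (hR : IsPSDKernel Ω R)
    {x z : E} (hx : x ∈ Ω) (hz : z ∈ Ω) (hzz : R z z = 0) :
    R x x ≤ (K x x - K x z) + (K z z - K z x) := by
  have hle := h 2 ![x, z] (by simp [Fin.forall_fin_two, hx, hz]) ![1, -1]
  have hxz := hR.apply_eq_zero_of_apply_self_eq_zero hx hz hzz
  rw [kernelQuadForm_two, kernelQuadForm_two, hzz, hxz, hR.symm hz hx, hxz] at hle
  linarith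

theorem KernelLE.apply_self_le_of_lipschitz {E : Type*} [SeminormedAddCommGroup E]
    {Ω : Set E} {K R : E → E → ℝ} (h : KernelLE Ω R K) (hR : IsPSDKernel Ω R) {L : ℝ}
    (hLip : ∀ x ∈ Ω, ∀ y ∈ Ω, |K x x - K x y| ≤ L * ‖x - y‖) {x z : E}
    (hx : x ∈ Ω) (hz : z ∈ Ω) (hzz : R z z = 0) : R x x ≤ 2 * L * ‖x - z‖ := by
  have h₁ := (abs_le.mp (hLip x hx z hz)).2
  have h₂ := (abs_le.mp (hLip z hz x hx)).2
  rw [norm_sub_rev] at h₂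
  linarith [h.apply_self_le_of_apply_self_eq_zero hR hx hz hzz]

theorem exists_norm_sub_le_fillDistance {d n : ℕ} (hn : 0 < n)
    {Ω : Set (EuclideanSpace ℝ (Fin d))} (hΩ : Bornology.IsBounded Ω)
    (z : Fin n → EuclideanSpace ℝ (Fin d)) {x : EuclideanSpace ℝ (Fin d)} (hx : x ∈ Ω) :
    ∃ i, ‖x - z i‖ ≤ fillDistance Ω z := by
  have : Nonempty (Fin n) := ⟨⟨0, hn⟩⟩
  obtain ⟨C, hC⟩ := hΩ.exists_norm_le
  have hbdd : BddAbove (Set.range fun y : Ω => ⨅ i, ‖y.1 - z i‖) := by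
    refine ⟨C + ‖z ⟨0, hn⟩‖, ?_⟩
    rintro _ ⟨y, rfl⟩
    calc ⨅ i, ‖y.1 - z i‖
        ≤ ‖y.1 - z ⟨0, hn⟩‖ :=
          ciInf_le ⟨0, Set.forall_mem_range.2 fun _ => norm_nonneg _⟩ _
      _ ≤ C + ‖z ⟨0, hn⟩‖ := (norm_sub_le _ _).trans (by gcongr; exact hC y y.2)
  obtain ⟨i, hi⟩ := exists_eq_ciInf_of_finite (f := fun i => ‖x - z i‖)
  exact ⟨i, hi.trans_le (le_ciSup hbdd ⟨x, hx⟩)⟩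

theorem residual_le_fillDistance_general {d n : ℕ} (hn : 0 < n)
    (Ω : Set (EuclideanSpace ℝ (Fin d))) (hΩ : IsCompact Ω)
    (K : EuclideanSpace ℝ (Fin d) → EuclideanSpace ℝ (Fin d) → ℝ)
    (hK : IsPSDKernel Ω K) (L : ℝ) (hL : 0 < L)
    (hLip : ∀ x ∈ Ω, ∀ y ∈ Ω, |K x x - K x y| ≤ L * ‖x - y‖)
    (z : Fin n → EuclideanSpace ℝ (Fin d)) (hzΩ : ∀ i, z i ∈ Ω) :
    ∀ x ∈ Ω, ∀ y ∈ Ω,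
      |cholResid K (List.ofFn z) x y| ≤ 4 * L * fillDistance Ω z := by
  intro x hx y hy
  have hpiv : ∀ w ∈ List.ofFn z, w ∈ Ω := by
    simp only [List.mem_ofFn]
    rintro _ ⟨i, rfl⟩
    exact hzΩ i
  have hR := hK.cholResid hpiv
  have hdiag : ∀ w ∈ Ω, cholResid K (List.ofFn z) w w ≤ 2 * L * fillDistance Ω z := by
    intro w hw
    obtain ⟨i, hi⟩ := exists_norm_sub_le_fillDistance hn hΩ.isBounded z hw
    calc cholResid K (List.ofFn z) w w ≤ 2 * L * ‖w - z i‖ :=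
          (hK.cholResid_le hpiv).apply_self_le_of_lipschitz hR hLip hw (hzΩ i)
            (hK.cholResid_apply_self_of_mem hpiv (List.mem_ofFn.mpr ⟨i, rfl⟩))
      _ ≤ 2 * L * fillDistance Ω z := by gcongr
  obtain ⟨i, hi⟩ := exists_norm_sub_le_fillDistance hn hΩ.isBounded z hx
  have hh : 0 ≤ fillDistance Ω z := (norm_nonneg _).trans hi
  calc |cholResid K (List.ofFn z) x y| ≤ 2 * L * fillDistance Ω z :=
        hR.abs_apply_le hx hy (hdiag x hx) (hdiag y hy)
    _ ≤ 4 * L * fillDistance Ω z := by gcongr; norm_num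

theorem residual_le_fillDistance {d n : ℕ} (hn : 0 < n)
    (Ω : Set (EuclideanSpace ℝ (Fin d))) (hΩ : IsCompact Ω) (hΩne : Ω.Nonempty)
    (K : EuclideanSpace ℝ (Fin d) → EuclideanSpace ℝ (Fin d) → ℝ)
    (hK : IsPSDKernel Ω K) (L : ℝ) (hL : 0 < L)
    (hLip : ∀ x ∈ Ω, ∀ y ∈ Ω, |K x x - K x y| ≤ L * ‖x - y‖)
    (z : Fin n → EuclideanSpace ℝ (Fin d)) (hzΩ : ∀ i, z i ∈ Ω)
    (hwd : ∀ k : Fin n,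
      0 < cholResid K ((List.ofFn z).take k) (z k) (z k)) :
    ∀ x ∈ Ω, ∀ y ∈ Ω,
      |cholResid K (List.ofFn z) x y| ≤ 4 * L * fillDistance Ω z :=
  residual_le_fillDistance_general hn Ω hΩ K hK L hL hLip z hzΩ
end

section
/- Let K be a symmetric positive definite kernel on compact Ω ⊂ ℝᵈ with diagonal Lipschitz constant L. Suppose the first n pivots Zₙ are chosen by global maximum volume pivoting: det(K[Zₙ,Zₙ]) ≥ det(K[B,B]) for every n-point subset B ⊂ Ω. If Ω is contained in a ball of radius R, then the Cholesky residual Rₙ with pivot set Zₙ satisfies ‖Rₙ‖_∞ ≤ 8LR/(n^{1/d} − 1). -/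
/-- A kernel `K` on a set `Ω` is symmetric positive definite if it is symmetric on `Ω`
and every finite kernel matrix at distinct points of `Ω` is positive definite. -/
def IsPDKernel {E : Type*} (Ω : Set E) (K : E → E → ℝ) : Prop :=
  (∀ x ∈ Ω, ∀ y ∈ Ω, K x y = K y x) ∧
  ∀ (n : ℕ) (p : Fin n → E), Function.Injective p → (∀ i, p i ∈ Ω) →
    ∀ c : Fin n → ℝ, c ≠ 0 → 0 < ∑ i, ∑ j, c i * c j * K (p i) (p j)

/-- The kernel matrix `[K(zᵢ, zⱼ)]` of the points `z`. -/
noncomputable def kernelMatrix {E : Type*} (K : E → E → ℝ) {n : ℕ}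
    (z : Fin n → E) : Matrix (Fin n) (Fin n) ℝ :=
  Matrix.of fun i j => K (z i) (z j)

/-- The Cholesky/Nyström residual (Schur complement) with pivot set `z`. -/
noncomputable def nystromResid {E : Type*} (K : E → E → ℝ) {n : ℕ}
    (z : Fin n → E) : E → E → ℝ :=
  fun x y => K x y -
    dotProduct (fun i => K x (z i))
      ((kernelMatrix K z)⁻¹.mulVec fun i => K (z i) y)

/-!
Fix a pivot `zᵢ` and let `W = Z \ {zᵢ}`. Since `det K[W ∪ {y}] = det K[W] · R_W(y, y)`, maximality
of the volume says that `R_W(·, ·)` is largest on the diagonal at `zᵢ`; adding the pivot `zᵢ` only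
decreases the residual, so `R_Z(x, x) ≤ R_W(zᵢ, zᵢ)`. As `R_W(zᵢ, zᵢ)` is the squared native-space
distance from `K(·, zᵢ)` to the span of the `K(·, w)`, `w ∈ W`, any other pivot `zⱼ` gives
`R_W(zᵢ, zᵢ) ≤ K(zᵢ, zᵢ) - 2 K(zᵢ, zⱼ) + K(zⱼ, zⱼ) ≤ 2 L ‖zᵢ - zⱼ‖`. A packing argument provides
two pivots with `‖zᵢ - zⱼ‖ ≤ 2R / (n^{1/d} - 1)`: balls of radius half the minimal separation
around the pivots are disjoint and fit in a ball of radius `R` plus that half. Off the diagonal,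
`R_Z` is the Schur complement of a positive semidefinite block matrix, hence itself positive
semidefinite, and `2 |R_Z(x, y)| ≤ R_Z(x, x) + R_Z(y, y)`.
-/

open Matrix Metric MeasureTheory Module
open scoped ENNReal

section Packing

variable {E : Type*} [NormedAddCommGroup E] [NormedSpace ℝ E] [FiniteDimensional ℝ E]

theorem card_mul_pow_le_of_le_dist {ι : Type*} [Fintype ι] [Nonempty ι] {z : ι → E} {c : E}
    {R q : ℝ} (hz : ∀ i, z i ∈ closedBall c R) (hq : 0 < q)
    (hsep : Pairwise fun i j => q ≤ dist (z i) (z j)) :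
    (Fintype.card ι : ℝ) * (q / 2) ^ finrank ℝ E ≤ (R + q / 2) ^ finrank ℝ E := by
  borelize E
  set μ : Measure E := Measure.addHaar
  have hR : 0 ≤ R + q / 2 := by
    linarith [dist_nonneg.trans (mem_closedBall.1 (hz (Classical.arbitrary ι)))]
  have hdisj : Pairwise fun i j => Disjoint (ball (z i) (q / 2)) (ball (z j) (q / 2)) :=
    fun i j hij => ball_disjoint_ball (by linarith [hsep hij])
  have hsub : (⋃ i, ball (z i) (q / 2)) ⊆ closedBall c (R + q / 2) :=
    Set.iUnion_subset fun i => (ball_subset_closedBall).trans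
      (closedBall_subset_closedBall' (by linarith [mem_closedBall.1 (hz i)]))
  have hvol : (Fintype.card ι : ℝ≥0∞) * ENNReal.ofReal ((q / 2) ^ finrank ℝ E) * μ (ball 0 1)
      ≤ ENNReal.ofReal ((R + q / 2) ^ finrank ℝ E) * μ (ball 0 1) := calc
    _ = ∑ i, μ (ball (z i) (q / 2)) := by
      simp [μ.addHaar_ball_of_pos _ (half_pos hq), mul_assoc]
    _ = μ (⋃ i, ball (z i) (q / 2)) :=
      (measure_iUnion hdisj fun _ => measurableSet_ball).trans (tsum_fintype _) |>.symm
    _ ≤ μ (closedBall c (R + q / 2)) := measure_mono hsub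
    _ = _ := μ.addHaar_closedBall c hR
  rw [ENNReal.mul_le_mul_iff_left (measure_ball_pos μ _ one_pos).ne' measure_ball_lt_top.ne,
    ← ENNReal.ofReal_natCast, ← ENNReal.ofReal_mul (by positivity),
    ENNReal.ofReal_le_ofReal_iff (by positivity)] at hvol
  exact hvol

theorem le_div_rpow_sub_one_of_mul_pow_le {d : ℕ} {n q R : ℝ} (hn : 1 < n) (hq : 0 ≤ q)
    (hR : 0 ≤ R) (h : n * (q / 2) ^ d ≤ (R + q / 2) ^ d) :
    q ≤ 2 * R / (n ^ ((1 : ℝ) / d) - 1) := by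
  have hd : d ≠ 0 := by
    rintro rfl
    simp only [pow_zero, mul_one] at h
    linarith
  have hroot : n ^ ((1 : ℝ) / d) * (q / 2) ≤ R + q / 2 := by
    refine le_of_pow_le_pow_left₀ hd (by positivity) ?_
    rwa [mul_pow, one_div, Real.rpow_inv_natCast_pow (by linarith) hd]
  have hgt : 1 < n ^ ((1 : ℝ) / d) := Real.one_lt_rpow hn (by positivity)
  rw [le_div_iff₀ (by linarith)]
  linarith

theorem exists_dist_le_of_injective {ι : Type*} [Fintype ι] {z : ι → E} {c : E} {R : ℝ}
    (hcard : 1 < Fintype.card ι) (hinj : Function.Injective z)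
    (hz : ∀ i, z i ∈ closedBall c R) :
    ∃ i j, i ≠ j ∧
      dist (z i) (z j) ≤ 2 * R / ((Fintype.card ι : ℝ) ^ ((1 : ℝ) / finrank ℝ E) - 1) := by
  classical
  obtain ⟨a, b, hab⟩ := Fintype.one_lt_card_iff.1 hcard
  have hne : (Finset.univ : Finset ι).offDiag.Nonempty :=
    ⟨(a, b), Finset.mem_offDiag.2 ⟨Finset.mem_univ _, Finset.mem_univ _, hab⟩⟩
  obtain ⟨⟨i, j⟩, hij, hmin⟩ :=
    Finset.exists_min_image _ (fun p : ι × ι => dist (z p.1) (z p.2)) hne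
  have hij : i ≠ j := (Finset.mem_offDiag.1 hij).2.2
  have : Nonempty ι := ⟨i⟩
  refine ⟨i, j, hij, le_div_rpow_sub_one_of_mul_pow_le (by exact_mod_cast hcard) dist_nonneg
    (dist_nonneg.trans (mem_closedBall.1 (hz i))) ?_⟩
  refine card_mul_pow_le_of_le_dist hz (dist_pos.2 (hinj.ne hij)) fun k l hkl => ?_
  exact hmin (k, l) (Finset.mem_offDiag.2 ⟨Finset.mem_univ _, Finset.mem_univ _, hkl⟩)

end Packing

namespace Matrix

variable {ι : Type*} [Fintype ι] [DecidableEq ι]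

theorem PosDef.two_mul_dotProduct_sub_le {A : Matrix ι ι ℝ} (hA : A.PosDef) (k v : ι → ℝ) :
    2 * (k ⬝ᵥ v) - v ⬝ᵥ A *ᵥ v ≤ k ⬝ᵥ A⁻¹ *ᵥ k := by
  set u := A⁻¹ *ᵥ k
  have hAu : A *ᵥ u = k := by
    rw [mulVec_mulVec, mul_nonsing_inv _ ((isUnit_iff_isUnit_det A).1 hA.isUnit), one_mulVec]
  have hsymm : u ⬝ᵥ A *ᵥ v = k ⬝ᵥ v := by
    rw [dotProduct_mulVec, ← mulVec_transpose, ← conjTranspose_eq_transpose_of_trivial, hA.1, hAu]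
  have h := hA.posSemidef.dotProduct_mulVec_nonneg (v - u)
  rw [star_trivial, mulVec_sub, dotProduct_sub, sub_dotProduct, sub_dotProduct, hsymm, hAu,
    dotProduct_comm v k, dotProduct_comm u k] at h
  linarith

theorem PosSemidef.two_mul_abs_apply_le {S : Matrix ι ι ℝ} (hS : S.PosSemidef) (i j : ι) :
    2 * |S i j| ≤ S i i + S j j := by
  have hsymm : S j i = S i j := hS.1.apply i j
  have hplus := hS.dotProduct_mulVec_nonneg (Pi.single i 1 + Pi.single j 1)
  have hminus := hS.dotProduct_mulVec_nonneg (Pi.single i 1 - Pi.single j 1)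
  simp only [star_trivial, mulVec_add, mulVec_sub, dotProduct_add, dotProduct_sub, add_dotProduct,
    sub_dotProduct, mulVec_single_one, single_dotProduct, one_mul, col_apply] at hplus hminus
  cases abs_cases (S i j) <;> linarith

theorem insertNth_zero_dotProduct {α : Type*} [NonUnitalNonAssocSemiring α] {n : ℕ}
    (i : Fin (n + 1)) (u : Fin n → α) (w : Fin (n + 1) → α) :
    i.insertNth 0 u ⬝ᵥ w = u ⬝ᵥ i.removeNth w := by
  simp [dotProduct, Fin.sum_univ_succAbove _ i, Fin.removeNth]

theorem insertNth_zero_dotProduct_mulVec {α : Type*} [CommSemiring α] {n : ℕ}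
    (M : Matrix (Fin (n + 1)) (Fin (n + 1)) α) (i : Fin (n + 1)) (u : Fin n → α) :
    i.insertNth 0 u ⬝ᵥ M *ᵥ i.insertNth 0 u = u ⬝ᵥ M.submatrix i.succAbove i.succAbove *ᵥ u := by
  rw [insertNth_zero_dotProduct]
  congr 1
  ext j
  rw [Fin.removeNth, mulVec, mulVec, dotProduct_comm, insertNth_zero_dotProduct, dotProduct_comm]
  rfl

end Matrix

namespace IsPDKernel

variable {E : Type*} {Ω : Set E} {K : E → E → ℝ}

theorem posDef_kernelMatrix (hK : IsPDKernel Ω K) {n : ℕ} {z : Fin n → E}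
    (hzΩ : ∀ i, z i ∈ Ω) (hinj : Function.Injective z) : (kernelMatrix K z).PosDef := by
  refine posDef_iff_dotProduct_mulVec.2 ⟨?_, fun v hv => ?_⟩
  · ext i j
    exact hK.1 _ (hzΩ j) _ (hzΩ i)
  · refine (hK.2 n z hinj hzΩ v hv).trans_eq ?_
    simp only [star_trivial, dotProduct, mulVec, kernelMatrix, of_apply, Finset.mul_sum]
    exact Finset.sum_congr rfl fun i _ => Finset.sum_congr rfl fun j _ => by ring

theorem posSemidef_of {ι : Type*} [Fintype ι] (hK : IsPDKernel Ω K) {p : ι → E}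
    (hpΩ : ∀ i, p i ∈ Ω) : (of fun i j => K (p i) (p j)).PosSemidef := by
  classical
  let e := Fintype.equivFin (Set.range p)
  have hq : (kernelMatrix K fun k => (e.symm k : E)).PosDef :=
    hK.posDef_kernelMatrix (fun k => by obtain ⟨i, hi⟩ := (e.symm k).2; exact hi ▸ hpΩ i)
      (Subtype.val_injective.comp e.symm.injective)
  convert hq.posSemidef.submatrix (e ∘ Set.rangeFactorization p) using 1
  ext i j
  simp only [kernelMatrix, submatrix_apply, of_apply, Function.comp_apply, Equiv.symm_apply_apply,
    Set.rangeFactorization_coe]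

end IsPDKernel

section Schur

variable {E : Type*} {K : E → E → ℝ} {n : ℕ} {ι : Type*}

theorem of_sumElim_eq_fromBlocks (z : Fin n → E) (y : ι → E) :
    (of fun a b => K (Sum.elim z y a) (Sum.elim z y b)) =
      fromBlocks (kernelMatrix K z) (of fun i b => K (z i) (y b)) (of fun a j => K (y a) (z j))
        (of fun a b => K (y a) (y b)) := by
  ext (a | a) (b | b) <;> rfl

theorem of_nystromResid_eq_schurComplement [Fintype ι] (z : Fin n → E) (y : ι → E) :
    (of fun a b => nystromResid K z (y a) (y b)) =
      (of fun a b => K (y a) (y b)) -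
        (of fun a j => K (y a) (z j)) * (kernelMatrix K z)⁻¹ * (of fun i b => K (z i) (y b)) := by
  ext a b
  simp only [nystromResid, of_apply, Matrix.sub_apply, mul_apply, dotProduct, mulVec,
    Finset.mul_sum, Finset.sum_mul]
  rw [Finset.sum_comm]
  simp only [mul_assoc]

/-- `Sum.elim w (fun _ => y) ∘ e` lists the pivots `w` and the point `y` in an arbitrary order. -/
theorem det_kernelMatrix_sumElim_comp {m : ℕ} (w : Fin m → E) (y : E)
    (e : Fin (m + 1) ≃ Fin m ⊕ Unit) [Invertible (kernelMatrix K w)] :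
    (kernelMatrix K (Sum.elim w (fun _ => y) ∘ e)).det =
      (kernelMatrix K w).det * nystromResid K w y y := by
  have : kernelMatrix K (Sum.elim w (fun _ => y) ∘ e) =
      (of fun a b => K (Sum.elim w (fun _ : Unit => y) a) (Sum.elim w (fun _ => y) b)).submatrix
        e e := rfl
  rw [this, det_submatrix_equiv_self, of_sumElim_eq_fromBlocks, det_fromBlocks₁₁,
    invOf_eq_nonsing_inv, ← of_nystromResid_eq_schurComplement,
    det_unique (of fun _ _ : Unit => nystromResid K w y y)]
  rfl

end Schur

namespace IsPDKernel

variable {E : Type*} {Ω : Set E} {K : E → E → ℝ} {n : ℕ} {z : Fin n → E}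

theorem posSemidef_nystromResid (hK : IsPDKernel Ω K) (hzΩ : ∀ i, z i ∈ Ω)
    (hinj : Function.Injective z) {ι : Type*} [Fintype ι] {y : ι → E} (hyΩ : ∀ a, y a ∈ Ω) :
    (of fun a b => nystromResid K z (y a) (y b)).PosSemidef := by
  have hA := hK.posDef_kernelMatrix hzΩ hinj
  let := hA.isUnit.invertible
  have hC : (of fun a j => K (y a) (z j)) = (of fun i b => K (z i) (y b))ᴴ := by
    ext a j
    exact hK.1 _ (hyΩ a) _ (hzΩ j)
  have h := hK.posSemidef_of (p := Sum.elim z y) (by rintro (i | a); exacts [hzΩ i, hyΩ a])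
  rw [of_sumElim_eq_fromBlocks, hC, PosDef.fromBlocks₁₁ _ _ hA] at h
  rwa [of_nystromResid_eq_schurComplement, hC]

theorem two_mul_abs_nystromResid_le (hK : IsPDKernel Ω K) (hzΩ : ∀ i, z i ∈ Ω)
    (hinj : Function.Injective z) {x y : E} (hx : x ∈ Ω) (hy : y ∈ Ω) :
    2 * |nystromResid K z x y| ≤ nystromResid K z x x + nystromResid K z y y :=
  (hK.posSemidef_nystromResid hzΩ hinj (y := ![x, y]) (by simp [Fin.forall_fin_two, hx, hy])
    ).two_mul_abs_apply_le 0 1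

theorem nystromResid_self_eq (hK : IsPDKernel Ω K) (hzΩ : ∀ i, z i ∈ Ω) {x : E} (hx : x ∈ Ω) :
    nystromResid K z x x =
      K x x - (fun i => K x (z i)) ⬝ᵥ (kernelMatrix K z)⁻¹ *ᵥ fun i => K x (z i) := by
  have : (fun i => K (z i) x) = fun i => K x (z i) := funext fun i => hK.1 _ (hzΩ i) _ hx
  rw [nystromResid, this]

theorem nystromResid_self_le (hK : IsPDKernel Ω K) (hzΩ : ∀ i, z i ∈ Ω)
    (hinj : Function.Injective z) {x : E} (hx : x ∈ Ω) (v : Fin n → ℝ) :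
    nystromResid K z x x ≤
      K x x - 2 * ((fun i => K x (z i)) ⬝ᵥ v) + v ⬝ᵥ kernelMatrix K z *ᵥ v := by
  rw [hK.nystromResid_self_eq hzΩ hx]
  linarith [(hK.posDef_kernelMatrix hzΩ hinj).two_mul_dotProduct_sub_le (fun i => K x (z i)) v]

theorem nystromResid_self_le_of_pivot (hK : IsPDKernel Ω K) (hzΩ : ∀ i, z i ∈ Ω)
    (hinj : Function.Injective z) {x : E} (hx : x ∈ Ω) (j : Fin n) :
    nystromResid K z x x ≤ K x x - 2 * K x (z j) + K (z j) (z j) := by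
  simpa [mulVec_single_one, kernelMatrix] using hK.nystromResid_self_le hzΩ hinj hx (Pi.single j 1)

theorem nystromResid_self_le_removeNth {z : Fin (n + 1) → E} (hK : IsPDKernel Ω K)
    (hzΩ : ∀ i, z i ∈ Ω) (hinj : Function.Injective z) {x : E} (hx : x ∈ Ω) (i : Fin (n + 1)) :
    nystromResid K z x x ≤ nystromResid K (i.removeNth z) x x := by
  set w := i.removeNth z
  have hwΩ : ∀ j, w j ∈ Ω := fun j => hzΩ _
  set k := fun j => K x (w j)
  set u := (kernelMatrix K w)⁻¹ *ᵥ k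
  have hAu : kernelMatrix K w *ᵥ u = k := by
    rw [mulVec_mulVec, mul_nonsing_inv _ ((isUnit_iff_isUnit_det _).1
      (hK.posDef_kernelMatrix hwΩ (hinj.comp i.succAbove_right_injective)).isUnit), one_mulVec]
  have h := hK.nystromResid_self_le hzΩ hinj hx (i.insertNth 0 u)
  rw [insertNth_zero_dotProduct_mulVec, dotProduct_comm, insertNth_zero_dotProduct] at h
  change _ ≤ K x x - 2 * (u ⬝ᵥ k) + u ⬝ᵥ kernelMatrix K w *ᵥ u at h
  rw [hAu, dotProduct_comm u k] at h
  rw [hK.nystromResid_self_eq hwΩ hx]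
  linarith

end IsPDKernel

section MaxVolume

variable {E : Type*} {n : ℕ}

def IsMaxVolume (Ω : Set E) (K : E → E → ℝ) (z : Fin n → E) : Prop :=
  ∀ b : Fin n → E, (∀ i, b i ∈ Ω) → (kernelMatrix K b).det ≤ (kernelMatrix K z).det

variable {Ω : Set E} {K : E → E → ℝ} {z : Fin n → E}

theorem IsMaxVolume.nystromResid_self_le (hmax : IsMaxVolume Ω K z) (hK : IsPDKernel Ω K)
    (hzΩ : ∀ i, z i ∈ Ω) (hinj : Function.Injective z) {i j : Fin n} (hij : i ≠ j) {x : E}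
    (hx : x ∈ Ω) : nystromResid K z x x ≤ K (z i) (z i) - 2 * K (z i) (z j) + K (z j) (z j) := by
  obtain ⟨m, rfl⟩ : ∃ m, n = m + 1 := Nat.exists_eq_add_one.2 i.pos
  set w := i.removeNth z
  have hwΩ : ∀ k, w k ∈ Ω := fun k => hzΩ _
  have hwinj : Function.Injective w := hinj.comp i.succAbove_right_injective
  have hA := hK.posDef_kernelMatrix hwΩ hwinj
  let := hA.isUnit.invertible
  let e : Fin (m + 1) ≃ Fin m ⊕ Unit :=
    (finSuccEquiv' i).trans (Equiv.optionEquivSumPUnit (Fin m))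
  have hz : Sum.elim w (fun _ => z i) ∘ e = z := by
    ext k
    cases k using Fin.succAboveCases i <;> simp [e, w, Fin.removeNth]
  have hvol : nystromResid K w x x ≤ nystromResid K w (z i) (z i) := by
    have hmem : ∀ s : Fin m ⊕ Unit, Sum.elim w (fun _ => x) s ∈ Ω := by
      rintro (k | _)
      exacts [hwΩ k, hx]
    have h := hmax (Sum.elim w (fun _ => x) ∘ e) fun k => hmem (e k)
    rw [det_kernelMatrix_sumElim_comp] at h
    conv_rhs at h => rw [← hz, det_kernelMatrix_sumElim_comp]
    exact le_of_mul_le_mul_left h hA.det_pos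
  obtain ⟨j, rfl⟩ := Fin.exists_succAbove_eq hij.symm
  calc nystromResid K z x x ≤ nystromResid K w x x :=
        hK.nystromResid_self_le_removeNth hzΩ hinj hx i
    _ ≤ nystromResid K w (z i) (z i) := hvol
    _ ≤ _ := hK.nystromResid_self_le_of_pivot hwΩ hwinj (hzΩ i) j

end MaxVolume

theorem IsMaxVolume.nystromResid_self_le_of_subset_closedBall {E : Type*} [NormedAddCommGroup E]
    [NormedSpace ℝ E] [FiniteDimensional ℝ E] {Ω : Set E} {K : E → E → ℝ} {n : ℕ}
    {z : Fin n → E} (hmax : IsMaxVolume Ω K z) (hK : IsPDKernel Ω K) {c : E} {R : ℝ}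
    (hball : Ω ⊆ closedBall c R) {L : ℝ} (hLip : ∀ x ∈ Ω, ∀ y ∈ Ω, |K x x - K x y| ≤ L * ‖x - y‖)
    (hn : 1 < n) (hzΩ : ∀ i, z i ∈ Ω) (hinj : Function.Injective z) {x : E} (hx : x ∈ Ω) :
    nystromResid K z x x ≤ 4 * L * R / ((n : ℝ) ^ ((1 : ℝ) / finrank ℝ E) - 1) := by
  obtain ⟨i, j, hij, hdist⟩ :=
    exists_dist_le_of_injective (by rwa [Fintype.card_fin]) hinj fun k => hball (hzΩ k)
  rw [Fintype.card_fin] at hdist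
  have hi := hLip _ (hzΩ i) _ (hzΩ j)
  have hj := hLip _ (hzΩ j) _ (hzΩ i)
  rw [← dist_eq_norm] at hi
  rw [← dist_eq_norm, dist_comm, ← hK.1 _ (hzΩ i) _ (hzΩ j)] at hj
  have hi' := le_abs_self (K (z i) (z i) - K (z i) (z j))
  have hj' := le_abs_self (K (z j) (z j) - K (z i) (z j))
  have hL : 0 ≤ L :=
    (mul_nonneg_iff_of_pos_right (dist_pos.2 (hinj.ne hij))).1 ((abs_nonneg _).trans hi)
  calc nystromResid K z x x ≤ K (z i) (z i) - 2 * K (z i) (z j) + K (z j) (z j) :=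
        hmax.nystromResid_self_le hK hzΩ hinj hij hx
    _ ≤ 2 * L * dist (z i) (z j) := by linarith
    _ ≤ 2 * L * (2 * R / ((n : ℝ) ^ ((1 : ℝ) / finrank ℝ E) - 1)) := by gcongr
    _ = _ := by ring

theorem global_max_volume_pivoting_convergence_general {d n : ℕ} (hn : 1 < n)
    (Ω : Set (EuclideanSpace ℝ (Fin d)))
    (c : EuclideanSpace ℝ (Fin d)) (R : ℝ) (hball : Ω ⊆ Metric.closedBall c R)
    (K : EuclideanSpace ℝ (Fin d) → EuclideanSpace ℝ (Fin d) → ℝ)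
    (hK : IsPDKernel Ω K) (L : ℝ)
    (hLip : ∀ x ∈ Ω, ∀ y ∈ Ω, |K x x - K x y| ≤ L * ‖x - y‖)
    (z : Fin n → EuclideanSpace ℝ (Fin d)) (hzΩ : ∀ i, z i ∈ Ω)
    (hzinj : Function.Injective z)
    -- global maximum volume pivoting: `z` maximizes the kernel matrix determinant
    (hmaxvol : ∀ b : Fin n → EuclideanSpace ℝ (Fin d), (∀ i, b i ∈ Ω) →
      (kernelMatrix K b).det ≤ (kernelMatrix K z).det) :
    ∀ x ∈ Ω, ∀ y ∈ Ω,
      |nystromResid K z x y| ≤ 8 * L * R / ((n : ℝ) ^ ((1 : ℝ) / (d : ℝ)) - 1) := by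
  intro x hx y hy
  have hdiag : ∀ x ∈ Ω,
      nystromResid K z x x ≤ 4 * L * R / ((n : ℝ) ^ ((1 : ℝ) / (d : ℝ)) - 1) := fun x hx => by
    simpa only [finrank_euclideanSpace_fin] using
      IsMaxVolume.nystromResid_self_le_of_subset_closedBall hmaxvol hK hball hLip hn hzΩ hzinj hx
  have hoff := hK.two_mul_abs_nystromResid_le hzΩ hzinj hx hy
  have h8 : 8 * L * R / ((n : ℝ) ^ ((1 : ℝ) / (d : ℝ)) - 1) =
      2 * (4 * L * R / ((n : ℝ) ^ ((1 : ℝ) / (d : ℝ)) - 1)) := by ring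
  linarith [hdiag x hx, hdiag y hy, abs_nonneg (nystromResid K z x y)]

theorem global_max_volume_pivoting_convergence {d n : ℕ} (hd : 0 < d) (hn : 1 < n)
    (Ω : Set (EuclideanSpace ℝ (Fin d))) (hΩ : IsCompact Ω)
    (c : EuclideanSpace ℝ (Fin d)) (R : ℝ) (hball : Ω ⊆ Metric.closedBall c R)
    (K : EuclideanSpace ℝ (Fin d) → EuclideanSpace ℝ (Fin d) → ℝ)
    (hK : IsPDKernel Ω K) (L : ℝ) (hL : 0 < L)
    (hLip : ∀ x ∈ Ω, ∀ y ∈ Ω, |K x x - K x y| ≤ L * ‖x - y‖)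
    (z : Fin n → EuclideanSpace ℝ (Fin d)) (hzΩ : ∀ i, z i ∈ Ω)
    (hzinj : Function.Injective z)
    -- global maximum volume pivoting: `z` maximizes the kernel matrix determinant
    (hmaxvol : ∀ b : Fin n → EuclideanSpace ℝ (Fin d), (∀ i, b i ∈ Ω) →
      (kernelMatrix K b).det ≤ (kernelMatrix K z).det) :
    ∀ x ∈ Ω, ∀ y ∈ Ω,
      |nystromResid K z x y| ≤ 8 * L * R / ((n : ℝ) ^ ((1 : ℝ) / (d : ℝ)) - 1) :=
  global_max_volume_pivoting_convergence_general hn Ω c R hball K hK L hLip z hzΩ hzinj hmaxvol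
end

section
/- Let A be an m×m real symmetric positive definite matrix and define G_A = max_{i≠j} |A_{ii} − A_{ij}|/|i−j|. Let Aₙ be the rank-n approximation from n steps of the Cholesky decomposition with complete pivoting (each pivot index maximizes the diagonal of the current residual). Then for 1 < n ≤ m, max_{i,j} |(A − Aₙ)_{ij}| ≤ 4(m−1)G_A/(n−1). -/
/-!
A Cholesky step `R ↦ R - R e_p e_pᵀ R / R_pp` is the congruence `Bᴴ R B` with
`B = 1 - e_p e_pᵀ R / R_pp`, and it lowers `R` by the rank-one positive semidefinite matrix
`R e_p e_pᵀ R / R_pp`. Hence the residuals stay positive semidefinite, decrease in the Loewner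
order, and vanish in the column of every index pivoted so far.

By pigeonhole two pivots `p a`, `p b` with `a < b` satisfy `(n - 1) |p a - p b| ≤ m - 1`.
The residual before step `b` vanishes in row and column `p a`, so testing it against
`e_{p b} - e_{p a}` bounds its pivot entry by the same quadratic form of `A`, which is at most
`2 G |p a - p b|`.
Complete pivoting spreads this bound to every diagonal entry, of that residual and hence of the
final one, and a positive semidefinite matrix satisfies `|R i j| ≤ max_k R k k`.
-/

/-- One pivoted Cholesky step on a matrix at pivot index `p`. -/
noncomputable def cholStepM {m : ℕ} (R : Matrix (Fin m) (Fin m) ℝ) (p : Fin m) :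
    Matrix (Fin m) (Fin m) ℝ :=
  Matrix.of fun i j => R i j - R i p * R p j / R p p

/-- The residual of the pivoted Cholesky algorithm on a matrix after pivoting at the
indices of the list `ps` (in order). -/
noncomputable def cholResidM {m : ℕ} (A : Matrix (Fin m) (Fin m) ℝ)
    (ps : List (Fin m)) : Matrix (Fin m) (Fin m) ℝ :=
  ps.foldl cholStepM A

open Matrix MatrixOrder

namespace Matrix.PosSemidef

variable {n : Type*} {R : Matrix n n ℝ}

theorem apply_symm (hR : R.PosSemidef) (i j : n) : R j i = R i j := by
  simpa using hR.1.apply i j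

theorem sq_apply_le_mul (hR : R.PosSemidef) (i j : n) : R i j ^ 2 ≤ R i i * R j j := by
  have h := (hR.submatrix ![i, j]).det_nonneg
  simp only [det_fin_two, submatrix_apply, cons_val_zero, cons_val_one, hR.apply_symm i j] at h
  linarith

theorem apply_eq_zero_of_diag_eq_zero (hR : R.PosSemidef) {p : n} (hp : R p p = 0) (i : n) :
    R i p = 0 := by
  have h := hR.sq_apply_le_mul i p
  rw [hp, mul_zero] at h
  exact pow_eq_zero_iff two_ne_zero |>.mp (le_antisymm h (sq_nonneg _))

theorem abs_apply_le_of_diag_le (hR : R.PosSemidef) {c : ℝ} (hc : ∀ i, R i i ≤ c) (i j : n) :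
    |R i j| ≤ c := by
  have hc0 : 0 ≤ c := hR.diag_nonneg.trans (hc i)
  refine abs_le_of_sq_le_sq ?_ hc0
  calc R i j ^ 2 ≤ R i i * R j j := hR.sq_apply_le_mul i j
    _ ≤ c * c := mul_le_mul (hc i) (hc j) hR.diag_nonneg hc0
    _ = c ^ 2 := (sq c).symm

end Matrix.PosSemidef

theorem Matrix.diag_le_of_le {n : Type*} {R S : Matrix n n ℝ} (h : R ≤ S) (i : n) :
    R i i ≤ S i i :=
  sub_nonneg.mp h.diag_nonneg

section CholeskyStep

variable {m : ℕ} {R : Matrix (Fin m) (Fin m) ℝ}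

theorem cholStepM_eq_conjTranspose_mul_mul (hR : R.PosSemidef) (p : Fin m) :
    cholStepM R p = (1 - vecMulVec (Pi.single p 1) (fun j => R p j / R p p))ᴴ * R *
      (1 - vecMulVec (Pi.single p 1) (fun j => R p j / R p p)) := by
  ext i j
  simp only [cholStepM, of_apply, hR.apply_symm p i, vecMulVec, Pi.single_apply, ite_mul, one_mul,
    zero_mul, conjTranspose_eq_transpose_of_trivial, transpose_sub, transpose_one, sub_mul,
    Matrix.mul_apply, Matrix.sub_apply, transpose_apply, Finset.sum_ite_eq', Finset.mem_univ,
    ↓reduceIte, Matrix.one_apply, mul_sub, mul_ite, mul_one, mul_zero, Finset.sum_sub_distrib]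
  rcases eq_or_ne (R p p) 0 with h | h
  · simp [h]
  · field_simp
    ring

theorem cholStepM_posSemidef (hR : R.PosSemidef) (p : Fin m) : (cholStepM R p).PosSemidef := by
  rw [cholStepM_eq_conjTranspose_mul_mul hR]
  exact hR.conjTranspose_mul_mul_same _

theorem cholStepM_le (hR : R.PosSemidef) (p : Fin m) : cholStepM R p ≤ R := by
  have : R - cholStepM R p = (R p p)⁻¹ • vecMulVec (fun i => R i p) (star fun i => R i p) := by
    ext i j
    simp only [cholStepM, Matrix.sub_apply, of_apply, sub_sub_cancel, vecMulVec, Pi.star_apply,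
      star_trivial, Matrix.smul_apply, hR.apply_symm p j, smul_eq_mul]
    ring
  rw [le_iff, this]
  exact (posSemidef_vecMulVec_self_star _).smul (inv_nonneg.mpr hR.diag_nonneg)

theorem cholStepM_apply_pivot (hR : R.PosSemidef) (p i : Fin m) : cholStepM R p i p = 0 := by
  rcases eq_or_ne (R p p) 0 with h | h
  · simp [cholStepM, hR.apply_eq_zero_of_diag_eq_zero h]
  · simp [cholStepM, h]

theorem cholStepM_apply_of_col_eq_zero {p : Fin m} (hp : ∀ i, R i p = 0) (q i : Fin m) :
    cholStepM R q i p = 0 := by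
  simp [cholStepM, hp]

end CholeskyStep

section Residual

variable {m : ℕ}

theorem cholResidM_cons (A : Matrix (Fin m) (Fin m) ℝ) (p : Fin m) (ps : List (Fin m)) :
    cholResidM A (p :: ps) = cholResidM (cholStepM A p) ps := rfl

theorem cholResidM_append (A : Matrix (Fin m) (Fin m) ℝ) (ps qs : List (Fin m)) :
    cholResidM A (ps ++ qs) = cholResidM (cholResidM A ps) qs :=
  List.foldl_append

theorem cholResidM_posSemidef {A : Matrix (Fin m) (Fin m) ℝ} (hA : A.PosSemidef)
    (ps : List (Fin m)) : (cholResidM A ps).PosSemidef := by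
  induction ps generalizing A with
  | nil => exact hA
  | cons p ps ih => exact ih (cholStepM_posSemidef hA p)

theorem cholResidM_le {A : Matrix (Fin m) (Fin m) ℝ} (hA : A.PosSemidef) (ps : List (Fin m)) :
    cholResidM A ps ≤ A := by
  induction ps generalizing A with
  | nil => exact le_rfl
  | cons p ps ih => exact (ih (cholStepM_posSemidef hA p)).trans (cholStepM_le hA p)

theorem cholResidM_le_take {A : Matrix (Fin m) (Fin m) ℝ} (hA : A.PosSemidef)
    (ps : List (Fin m)) (k : ℕ) : cholResidM A ps ≤ cholResidM A (ps.take k) := by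
  conv_lhs => rw [← List.take_append_drop k ps, cholResidM_append]
  exact cholResidM_le (cholResidM_posSemidef hA _) _

theorem cholResidM_apply_of_col_eq_zero {A : Matrix (Fin m) (Fin m) ℝ} {p : Fin m}
    (hp : ∀ i, A i p = 0) (ps : List (Fin m)) (i : Fin m) : cholResidM A ps i p = 0 := by
  induction ps generalizing A with
  | nil => exact hp i
  | cons q ps ih => exact ih (cholStepM_apply_of_col_eq_zero hp q)

theorem cholResidM_apply_of_mem {A : Matrix (Fin m) (Fin m) ℝ} (hA : A.PosSemidef) {p : Fin m}
    {ps : List (Fin m)} (hp : p ∈ ps) (i : Fin m) : cholResidM A ps i p = 0 := by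
  obtain ⟨ps₁, ps₂, rfl⟩ := List.append_of_mem hp
  rw [cholResidM_append, cholResidM_cons]
  exact cholResidM_apply_of_col_eq_zero
    (cholStepM_apply_pivot (cholResidM_posSemidef hA ps₁) p) ps₂ i

theorem dotProduct_mulVec_single_sub_single (M : Matrix (Fin m) (Fin m) ℝ) (p q : Fin m) :
    (Pi.single q 1 - Pi.single p 1) ⬝ᵥ M *ᵥ (Pi.single q 1 - Pi.single p 1) =
      M q q - M q p - M p q + M p p := by
  simp only [mulVec_sub, mulVec_single, MulOpposite.op_one, one_smul, dotProduct_sub,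
    sub_dotProduct, single_dotProduct, col_apply, one_mul]
  ring

theorem cholResidM_diag_le_of_mem {A : Matrix (Fin m) (Fin m) ℝ} (hA : A.PosSemidef)
    {p : Fin m} {ps : List (Fin m)} (hp : p ∈ ps) (q : Fin m) :
    cholResidM A ps q q ≤ A q q - A q p - A p q + A p p := by
  have hcol := cholResidM_apply_of_mem hA hp
  have hrow := (cholResidM_posSemidef hA ps).apply_symm q p
  have := (cholResidM_le hA ps).dotProduct_mulVec_nonneg (Pi.single q 1 - Pi.single p 1)
  simp only [star_trivial, sub_mulVec, dotProduct_sub, dotProduct_mulVec_single_sub_single,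
    hrow, hcol] at this
  linarith

end Residual

theorem List.mem_take_ofFn_of_lt {α : Type*} {n : ℕ} (f : Fin n → α) {a b : Fin n} (h : a < b) :
    f a ∈ (List.ofFn f).take b := by
  rw [List.mem_take_iff_getElem]
  exact ⟨a, by simpa using h, by simp⟩

theorem Nat.mul_abs_sub_lt_of_div_eq {x y k m : ℕ} (hm : 0 < m) (h : x * k / m = y * k / m) :
    (k : ℤ) * |(x : ℤ) - y| < m := by
  have hx := Nat.div_add_mod (x * k) m
  have hy := Nat.div_add_mod (y * k) m
  rw [h] at hx
  have e : (k : ℤ) * (x - y) = (x * k % m : ℕ) - (y * k % m : ℕ) := by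
    zify at hx hy ⊢
    linear_combination hy - hx
  rw [← abs_of_nonneg (Int.natCast_nonneg k), ← abs_mul, e, abs_sub_comm]
  exact Int.abs_sub_lt_of_lt_lt (Nat.mod_lt _ hm) (Nat.mod_lt _ hm)

theorem exists_lt_mul_abs_sub_le {m n : ℕ} (hn : 1 < n) (p : Fin n → Fin m) :
    ∃ a b : Fin n, a < b ∧ ((n : ℝ) - 1) * |(p a : ℝ) - p b| ≤ m - 1 := by
  have hm : 0 < m := (p ⟨0, by omega⟩).pos
  -- two of the `n` pivots share one of the `n - 1` buckets `⌊p k (n - 1) / m⌋`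
  let bucket : Fin n → Fin (n - 1) := fun k =>
    ⟨p k * (n - 1) / m, Nat.div_lt_of_lt_mul (Nat.mul_lt_mul_of_pos_right (p k).2 (by omega))⟩
  have key : ∀ a b, bucket a = bucket b → ((n : ℝ) - 1) * |(p a : ℝ) - p b| ≤ m - 1 := by
    intro a b hab
    have := Int.le_sub_one_of_lt (Nat.mul_abs_sub_lt_of_div_eq hm (Fin.val_eq_of_eq hab))
    rw [Nat.cast_sub hn.le, Nat.cast_one] at this
    exact_mod_cast this
  obtain ⟨a, b, hne, heq⟩ := Fintype.exists_ne_map_eq_of_card_lt bucket (by simp; omega)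
  rcases hne.lt_or_gt with h | h
  · exact ⟨a, b, h, key a b heq⟩
  · exact ⟨b, a, h, key b a heq.symm⟩

theorem diag_sub_sub_add_le_of_forall_abs_le {m : ℕ} {A : Matrix (Fin m) (Fin m) ℝ} {G : ℝ}
    (hG : ∀ i j : Fin m, i ≠ j → |A i i - A i j| ≤ G * |(i : ℝ) - (j : ℝ)|) (p q : Fin m) :
    A q q - A q p - A p q + A p p ≤ 2 * G * |(p : ℝ) - q| := by
  rcases eq_or_ne p q with rfl | hpq
  · simp
  have hqp := (le_abs_self _).trans (hG q p hpq.symm)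
  have hpq := (le_abs_self _).trans (hG p q hpq)
  rw [abs_sub_comm] at hqp
  linarith

theorem matrix_complete_pivoting_convergence_general {m n : ℕ} (hn1 : 1 < n)
    (A : Matrix (Fin m) (Fin m) ℝ) (hA : A.PosDef)
    (G : ℝ)
    -- `G` is the discrete diagonal Lipschitz constant `G_A = max_{i≠j} |A i i - A i j| / |i - j|`
    (hG : ∀ i j : Fin m, i ≠ j → |A i i - A i j| ≤ G * |(i : ℝ) - (j : ℝ)|)
    (p : Fin n → Fin m)
    -- complete pivoting: at each step the pivot index maximizes the diagonal of the residual
    (hcp : ∀ k : Fin n, ∀ i : Fin m,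
      cholResidM A ((List.ofFn p).take k) i i ≤
        cholResidM A ((List.ofFn p).take k) (p k) (p k)) :
    ∀ i j : Fin m,
      |cholResidM A (List.ofFn p) i j| ≤ 4 * ((m : ℝ) - 1) * G / ((n : ℝ) - 1) := by
  intro i j
  obtain ⟨a, b, hab, hgap⟩ := exists_lt_mul_abs_sub_le hn1 p
  set d := |(p a : ℝ) - p b|
  set Rb := cholResidM A ((List.ofFn p).take b)
  have hpivot : Rb (p b) (p b) ≤ 2 * G * d :=
    (cholResidM_diag_le_of_mem hA.posSemidef (List.mem_take_ofFn_of_lt p hab) (p b)).trans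
      (diag_sub_sub_add_le_of_forall_abs_le hG (p a) (p b))
  have hdiag (k : Fin m) : cholResidM A (List.ofFn p) k k ≤ 2 * G * d :=
    (diag_le_of_le (cholResidM_le_take hA.posSemidef _ b) k).trans ((hcp b k).trans hpivot)
  refine ((cholResidM_posSemidef hA.posSemidef _).abs_apply_le_of_diag_le hdiag i j).trans ?_
  have hn : (0 : ℝ) < n - 1 := by rw [sub_pos]; exact_mod_cast hn1
  rcases Nat.lt_or_ge 1 m with hm | hm
  · have hG0 : 0 ≤ G := by simpa using (abs_nonneg _).trans (hG ⟨0, by omega⟩ ⟨1, hm⟩ (by simp))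
    rw [le_div_iff₀ hn]
    have hm' : (0 : ℝ) ≤ m - 1 := by rw [sub_nonneg]; exact_mod_cast hm.le
    nlinarith [mul_le_mul_of_nonneg_left hgap hG0, mul_nonneg hG0 hm']
  · have hm1 : (m : ℝ) = 1 := by exact_mod_cast (show m = 1 by have := i.pos; omega)
    have hd : d = 0 := by nlinarith [abs_nonneg ((p a : ℝ) - p b)]
    simp [hd, hm1]

theorem matrix_complete_pivoting_convergence {m n : ℕ} (hn1 : 1 < n) (hnm : n ≤ m)
    (A : Matrix (Fin m) (Fin m) ℝ) (hA : A.PosDef)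
    (G : ℝ)
    -- `G` is the discrete diagonal Lipschitz constant `G_A = max_{i≠j} |A i i - A i j| / |i - j|`
    (hG : ∀ i j : Fin m, i ≠ j → |A i i - A i j| ≤ G * |(i : ℝ) - (j : ℝ)|)
    (hGle : ∃ i j : Fin m, i ≠ j ∧ |A i i - A i j| = G * |(i : ℝ) - (j : ℝ)|)
    (p : Fin n → Fin m)
    -- complete pivoting: at each step the pivot index maximizes the diagonal of the residual
    (hcp : ∀ k : Fin n, ∀ i : Fin m,
      cholResidM A ((List.ofFn p).take k) i i ≤
        cholResidM A ((List.ofFn p).take k) (p k) (p k)) :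
    ∀ i j : Fin m,
      |cholResidM A (List.ofFn p) i j| ≤ 4 * ((m : ℝ) - 1) * G / ((n : ℝ) - 1) :=
  matrix_complete_pivoting_convergence_general hn1 A hA G hG p hcp
end
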